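/- arXiv:2404.14367 — 2 statements merged into one kernel-verified Lean document; each statement's English description precedes it below -/
import Mathlib

section
/- Let Y be a nonempty finite set and π : ℝⁿ → (Y → ℝ) a parameterized family of probability distributions such that for each y ∈ Y the map θ ↦ π(θ)(y) is differentiable at θ₀, π(θ₀)(y) > 0 for all y, and Σ_{y∈Y} π(θ)(y) = 1 for all θ. Fix y_w, y_l ∈ Y with ⟨∇log π(y_w), ∇log π(y_l)⟩ ≤ 0 (gradient-alignment condition), and constants c₁ ≥ 0, c₂ ≥ 0. Let v = c₁·∇log π(y_w) − c₂·∇log π(y_l) and v₀ = c₁·∇log π(y_w). Then: (i) the derivative at t = 0 of t ↦ log π(θ₀ + t·v)(y_w) is greater than or equal to the derivative at t = 0 of t ↦ log π(θ₀ + t·v₀)(y_w); and (ii) the derivative at t = 0 of t ↦ log π(θ₀ + t·v)(y_l) is less than or equal to the derivative at t = 0 of t ↦ log π(θ₀ + t·v₀)(y_l). That is, under nonpositive gradient alignment, the negative-gradient term increases the instantaneous rate of the preferred response's log-likelihood and decreases that of the dispreferred response (second conclusion of Lemma 2). -/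
open scoped RealInnerProductSpace

/-! Along a line `t ↦ θ₀ + t • u` the rate of change of `log π(·)(y)` at `t = 0` is
`⟪∇log π(y), u⟫`. Subtracting `c₂ • gl` from the direction therefore changes the rate of `y_w` by
`-c₂ ⟪gw, gl⟫ ≥ 0` and that of `y_l` by `-c₂ ‖gl‖² ≤ 0`. -/

section InnerProductSpace

variable {F : Type*} [NormedAddCommGroup F] [InnerProductSpace ℝ F]

theorem deriv_comp_add_smul_eq_inner_gradient [CompleteSpace F] {f : F → ℝ} {x : F}
    (hf : DifferentiableAt ℝ f x) (u : F) :
    deriv (fun t : ℝ => f (x + t • u)) 0 = ⟪gradient f x, u⟫ := by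
  rw [inner_gradient_left, ← hf.lineDeriv_eq_fderiv]
  rfl

theorem inner_le_inner_sub_smul_of_inner_nonpos {g h : F} (hgh : ⟪g, h⟫ ≤ 0) {c : ℝ}
    (hc : 0 ≤ c) (v : F) : ⟪g, v⟫ ≤ ⟪g, v - c • h⟫ := by
  rw [inner_sub_right, real_inner_smul_right]
  nlinarith

theorem inner_sub_smul_self_le (h v : F) {c : ℝ} (hc : 0 ≤ c) : ⟪h, v - c • h⟫ ≤ ⟪h, v⟫ := by
  rw [inner_sub_right, real_inner_smul_right]
  nlinarith [real_inner_self_nonneg (x := h)]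

end InnerProductSpace

theorem negative_gradient_helps_under_alignment_general
    {n : ℕ} {Y : Type*}
    (π : EuclideanSpace ℝ (Fin n) → Y → ℝ) (θ₀ : EuclideanSpace ℝ (Fin n))
    (hdiff : ∀ y, DifferentiableAt ℝ (fun θ => π θ y) θ₀)
    (hpos : ∀ y, 0 < π θ₀ y)
    (y_w y_l : Y) (c₁ c₂ : ℝ) (hc₂ : 0 ≤ c₂)
    (gw gl v v₀ : EuclideanSpace ℝ (Fin n))
    (hgw : gw = gradient (fun θ => Real.log (π θ y_w)) θ₀)
    (hgl : gl = gradient (fun θ => Real.log (π θ y_l)) θ₀)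
    (halign : ⟪gw, gl⟫ ≤ 0)
    (hv : v = c₁ • gw - c₂ • gl) (hv₀ : v₀ = c₁ • gw) :
    (deriv (fun t : ℝ => Real.log (π (θ₀ + t • v) y_w)) 0 ≥
      deriv (fun t : ℝ => Real.log (π (θ₀ + t • v₀) y_w)) 0) ∧
    (deriv (fun t : ℝ => Real.log (π (θ₀ + t • v) y_l)) 0 ≤
      deriv (fun t : ℝ => Real.log (π (θ₀ + t • v₀) y_l)) 0) := by
  have hlog (y : Y) : DifferentiableAt ℝ (fun θ => Real.log (π θ y)) θ₀ :=
    (hdiff y).log (hpos y).ne'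
  simp only [deriv_comp_add_smul_eq_inner_gradient (hlog _), ← hgw, ← hgl, hv, hv₀]
  exact ⟨inner_le_inner_sub_smul_of_inner_nonpos halign hc₂ _, inner_sub_smul_self_le gl _ hc₂⟩

/-- second conclusion of Lemma 2: under nonpositive gradient
alignment `⟨∇log π(y_w), ∇log π(y_l)⟩ ≤ 0` and `c₁, c₂ ≥ 0`, relative to the
direction `v₀ = c₁·∇log π(y_w)`, the negative-gradient direction
`v = c₁·∇log π(y_w) − c₂·∇log π(y_l)` (i) does not decrease the instantaneous
rate of the preferred response's log-likelihood and (ii) does not increase that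
of the dispreferred response. -/
theorem negative_gradient_helps_under_alignment
    {n : ℕ} {Y : Type*} [Fintype Y] [Nonempty Y]
    (π : EuclideanSpace ℝ (Fin n) → Y → ℝ) (θ₀ : EuclideanSpace ℝ (Fin n))
    (hdiff : ∀ y, DifferentiableAt ℝ (fun θ => π θ y) θ₀)
    (hpos : ∀ y, 0 < π θ₀ y)
    (hsum : ∀ θ, ∑ y, π θ y = 1)
    (y_w y_l : Y) (c₁ c₂ : ℝ) (hc₁ : 0 ≤ c₁) (hc₂ : 0 ≤ c₂)
    (gw gl v v₀ : EuclideanSpace ℝ (Fin n))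
    (hgw : gw = gradient (fun θ => Real.log (π θ y_w)) θ₀)
    (hgl : gl = gradient (fun θ => Real.log (π θ y_l)) θ₀)
    (halign : ⟪gw, gl⟫ ≤ 0)
    (hv : v = c₁ • gw - c₂ • gl) (hv₀ : v₀ = c₁ • gw) :
    (deriv (fun t : ℝ => Real.log (π (θ₀ + t • v) y_w)) 0 ≥
      deriv (fun t : ℝ => Real.log (π (θ₀ + t • v₀) y_w)) 0) ∧
    (deriv (fun t : ℝ => Real.log (π (θ₀ + t • v) y_l)) 0 ≤
      deriv (fun t : ℝ => Real.log (π (θ₀ + t • v₀) y_l)) 0) :=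
  negative_gradient_helps_under_alignment_general π θ₀ hdiff hpos y_w y_l c₁ c₂ hc₂ gw gl v v₀ hgw
    hgl halign hv hv₀
end

section
/- Let Y be a nonempty finite set and q a probability distribution on Y with q(y) > 0 for all y. For f : Y → ℝ let p = softmax(f), i.e., p(y) = exp(f(y))/Σ_{k∈Y} exp(f(k)). Then for each j ∈ Y, the partial derivative of the reverse KL divergence f ↦ D_KL(softmax(f)‖q) with respect to the logit coordinate f(j) equals p(j)·( log(p(j)/q(j)) − D_KL(p‖q) ). -/
open scoped BigOperators

/-- Softmax distribution attached to a vector of logits on a finite type. -/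
noncomputable def softmax {Y : Type*} [Fintype Y] (f : Y → ℝ) (y : Y) : ℝ :=
  Real.exp (f y) / ∑ k, Real.exp (f k)

/-- KL divergence between two distributions on a finite type,
with the convention `0 * log 0 = 0` (automatic since `0 * x = 0`). -/
noncomputable def KL {Y : Type*} [Fintype Y] (p q : Y → ℝ) : ℝ :=
  ∑ y, p y * Real.log (p y / q y)

/-!
Along a curve of logits with velocity `v`, the softmax distribution moves by
`ṗ y = p y * (v y - E_p v)`, and `d/ds (p log (p / q)) = ṗ * (log (p / q) + 1)`.
Since `∑ ṗ = 0` the `+ 1` drops out, so the derivative of `KL (softmax ·) q` is the covariance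
of `v` and `log (p / q)` under `p`; for `v = Pi.single j 1` this is
`p j * (log (p j / q j) - KL p q)`.
-/

open Finset Real

section Softmax

variable {Y : Type*} [Fintype Y] [Nonempty Y]

lemma sum_exp_pos (f : Y → ℝ) : 0 < ∑ k, exp (f k) :=
  sum_pos (fun k _ ↦ exp_pos (f k)) univ_nonempty

lemma softmax_pos (f : Y → ℝ) (y : Y) : 0 < softmax f y :=
  div_pos (exp_pos _) (sum_exp_pos f)

lemma sum_softmax (f : Y → ℝ) : ∑ y, softmax f y = 1 := by
  simp only [softmax, ← sum_div]
  exact div_self (sum_exp_pos f).ne'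

lemma hasDerivAt_softmax {g : ℝ → Y → ℝ} {g' : Y → ℝ} {x : ℝ} (hg : HasDerivAt g g' x)
    (y : Y) :
    HasDerivAt (fun s ↦ softmax (g s) y)
      (softmax (g x) y * (g' y - ∑ k, softmax (g x) k * g' k)) x := by
  have hexp (k : Y) : HasDerivAt (fun s ↦ exp (g s k)) (exp (g x k) * g' k) x :=
    ((hasDerivAt_pi.mp hg) k).exp
  refine ((hexp y).fun_div (HasDerivAt.fun_sum fun k _ ↦ hexp k)
    (sum_exp_pos (g x)).ne').congr_deriv ?_
  simp only [softmax, div_mul_eq_mul_div, ← sum_div]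
  field_simp

end Softmax

lemma HasDerivAt.mul_log_div_const {p : ℝ → ℝ} {p' x c : ℝ} (hp : HasDerivAt p p' x)
    (hpx : p x ≠ 0) (hc : c ≠ 0) :
    HasDerivAt (fun s ↦ p s * Real.log (p s / c)) (p' * (Real.log (p x / c) + 1)) x := by
  refine (hp.mul ((hp.div_const c).log (div_ne_zero hpx hc))).congr_deriv ?_
  field_simp

lemma sum_mul_sub_mul_add_one {Y : Type*} [Fintype Y] {p : Y → ℝ} (hp : ∑ y, p y = 1)
    (v h : Y → ℝ) :
    ∑ y, p y * (v y - ∑ k, p k * v k) * (h y + 1)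
      = ∑ y, p y * v y * h y - (∑ y, p y * v y) * ∑ y, p y * h y := by
  simp only [mul_add, sub_mul, mul_sub, sum_add_distrib, sum_sub_distrib, ← sum_mul, mul_one, hp]
  simp only [mul_right_comm (p _) (∑ k, p k * v k), ← sum_mul]
  ring

lemma hasDerivAt_KL_softmax {Y : Type*} [Fintype Y] [Nonempty Y] {q : Y → ℝ}
    (hq : ∀ y, q y ≠ 0) {g : ℝ → Y → ℝ} {g' : Y → ℝ} {x : ℝ} (hg : HasDerivAt g g' x) :
    HasDerivAt (fun s ↦ KL (softmax (g s)) q)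
      (∑ y, softmax (g x) y * g' y * log (softmax (g x) y / q y)
        - (∑ y, softmax (g x) y * g' y) * KL (softmax (g x)) q) x := by
  rw [KL, ← sum_mul_sub_mul_add_one (sum_softmax (g x))]
  exact HasDerivAt.fun_sum fun y _ ↦
    (hasDerivAt_softmax hg y).mul_log_div_const (softmax_pos _ y).ne' (hq y)

theorem reverse_KL_logit_partial_deriv_general
    {Y : Type*} [Fintype Y] [DecidableEq Y]
    (q : Y → ℝ) (hq_pos : ∀ y, 0 < q y)
    (f : Y → ℝ) (j : Y) :
    HasDerivAt (fun s : ℝ => KL (softmax (Function.update f j s)) q)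
      (softmax f j * (Real.log (softmax f j / q j) - KL (softmax f) q)) (f j) := by
  have : Nonempty Y := ⟨j⟩
  have h := hasDerivAt_KL_softmax (fun y ↦ (hq_pos y).ne') (hasDerivAt_update f j (f j))
  simp only [Function.update_eq_self] at h
  convert h using 1
  simp [Pi.single_apply, mul_sub]

/-- the partial derivative of the reverse KL divergence
`f ↦ D_KL(softmax f ‖ q)` with respect to the logit coordinate `f(j)` equals
`p(j)·( log(p(j)/q(j)) − D_KL(p‖q) )` with `p = softmax f`. -/
theorem reverse_KL_logit_partial_deriv
    {Y : Type*} [Fintype Y] [Nonempty Y] [DecidableEq Y]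
    (q : Y → ℝ) (hq_pos : ∀ y, 0 < q y) (hq_sum : ∑ y, q y = 1)
    (f : Y → ℝ) (j : Y) :
    HasDerivAt (fun s : ℝ => KL (softmax (Function.update f j s)) q)
      (softmax f j * (Real.log (softmax f j / q j) - KL (softmax f) q)) (f j) :=
  reverse_KL_logit_partial_deriv_general q hq_pos f j
end
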